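/- arXiv:2211.08395 — 4 statements merged into one kernel-verified Lean document; each statement's English description precedes it below -/
import Mathlib

section
/- Let P, Q, R, y₀, y₁, y₂, s₀, s₁, s₂ ∈ ℂ satisfy y₀ + y₁ + y₂ = -P/2, y₀y₁ + y₀y₂ + y₁y₂ = (P² - 4R)/16, s₀² = y₀, s₁² = y₁, s₂² = y₂, and 8·s₀·s₁·s₂ = -Q. Then u = s₀ + s₁ + s₂ is a root of the depressed quartic: u⁴ + P·u² + Q·u + R = 0. -/
/-!
The four numbers `±s₀ ± s₁ ± s₂` with an even number of minus signs are the roots of a quartic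
whose coefficients are symmetric functions of `s₀², s₁², s₂²` and `s₀ s₁ s₂`. The hypotheses say
exactly that this quartic is `X⁴ + P X² + Q X + R`.
-/

theorem add_add_quartic_eq_zero {R : Type*} [CommRing R] (s₀ s₁ s₂ : R) :
    (s₀ + s₁ + s₂) ^ 4 - 2 * (s₀ ^ 2 + s₁ ^ 2 + s₂ ^ 2) * (s₀ + s₁ + s₂) ^ 2
      - 8 * (s₀ * s₁ * s₂) * (s₀ + s₁ + s₂)
      + ((s₀ ^ 2 + s₁ ^ 2 + s₂ ^ 2) ^ 2 - 4 * (s₀ ^ 2 * s₁ ^ 2 + s₀ ^ 2 * s₂ ^ 2 + s₁ ^ 2 * s₂ ^ 2))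
      = 0 := by
  ring

theorem depressed_quartic_root (P Q R y₀ y₁ y₂ s₀ s₁ s₂ : ℂ)
    (he1 : y₀ + y₁ + y₂ = -P/2)
    (he2 : y₀*y₁ + y₀*y₂ + y₁*y₂ = (P^2 - 4*R)/16)
    (hs0 : s₀^2 = y₀) (hs1 : s₁^2 = y₁) (hs2 : s₂^2 = y₂)
    (hprod : 8*s₀*s₁*s₂ = -Q) :
    (s₀+s₁+s₂)^4 + P*(s₀+s₁+s₂)^2 + Q*(s₀+s₁+s₂) + R = 0 := by
  subst hs0 hs1 hs2
  have hP : P = -2 * (s₀ ^ 2 + s₁ ^ 2 + s₂ ^ 2) := by linear_combination 2 * he1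
  have hQ : Q = -8 * (s₀ * s₁ * s₂) := by linear_combination hprod
  have hR : R = (s₀ ^ 2 + s₁ ^ 2 + s₂ ^ 2) ^ 2
      - 4 * (s₀ ^ 2 * s₁ ^ 2 + s₀ ^ 2 * s₂ ^ 2 + s₁ ^ 2 * s₂ ^ 2) := by
    linear_combination (P / 2 - (s₀ ^ 2 + s₁ ^ 2 + s₂ ^ 2)) * he1 + 4 * he2
  subst hP hQ hR
  linear_combination add_add_quartic_eq_zero s₀ s₁ s₂
end

section
/- Let a, b, c, d, e ∈ ℂ with a ≠ 0. Define P = -6(b/a)² + 16c/a, Q = 8(b/a)³ - 32cb/a² + 64d/a, and R = -3(b/a)⁴ + 16cb²/a³ - 64db/a² + 256e/a. Let y₀, y₁, y₂, s₀, s₁, s₂ ∈ ℂ satisfy y₀ + y₁ + y₂ = -P/2, y₀y₁ + y₀y₂ + y₁y₂ = (P² - 4R)/16, s₀² = y₀, s₁² = y₁, s₂² = y₂, and 8·s₀·s₁·s₂ = -Q. Then x = (-(b/a) + s₀ + s₁ + s₂)/4 satisfies a·x⁴ + b·x³ + c·x² + d·x + e = 0. -/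
/-!
Substituting `x = (u - b/a)/4` turns `a x⁴ + b x³ + c x² + d x + e` into `a/256 · (u⁴ + P u² + Q u + R)`,
so it suffices that `u = s₀ + s₁ + s₂` is a root of the depressed quartic. Expanding `u²` and `u⁴` in
terms of `σ = s₀s₁ + s₀s₂ + s₁s₂`, the relation `σ² = y₀y₁ + y₀y₂ + y₁y₂ + 2 s₀s₁s₂ u` together with
the prescribed values of `y₀ + y₁ + y₂`, `y₀y₁ + y₀y₂ + y₁y₂` and `s₀s₁s₂` makes every term cancel.
-/

theorem depressed_quartic_eval_sum_sqrt_eq_zero {K : Type*} [Field K] [CharZero K]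
    (P Q R s₀ s₁ s₂ : K)
    (he1 : s₀^2 + s₁^2 + s₂^2 = -P/2)
    (he2 : s₀^2*s₁^2 + s₀^2*s₂^2 + s₁^2*s₂^2 = (P^2 - 4*R)/16)
    (hprod : 8*s₀*s₁*s₂ = -Q) :
    (s₀ + s₁ + s₂)^4 + P*(s₀ + s₁ + s₂)^2 + Q*(s₀ + s₁ + s₂) + R = 0 := by
  linear_combination (s₀^2 + s₁^2 + s₂^2 + P/2 + 4*(s₀*s₁ + s₀*s₂ + s₁*s₂)) * he1 +
    4 * he2 + (s₀ + s₁ + s₂) * hprod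

theorem quartic_eval_shift_eq_depressed {K : Type*} [Field K] [CharZero K] {a : K} (ha : a ≠ 0)
    (b c d e u : K) :
    a*((-(b/a) + u)/4)^4 + b*((-(b/a) + u)/4)^3 + c*((-(b/a) + u)/4)^2 + d*((-(b/a) + u)/4) + e
      = a/256 * (u^4 + (-6*(b/a)^2 + 16*c/a)*u^2
          + (8*(b/a)^3 - 32*c*b/a^2 + 64*d/a)*u
          + (-3*(b/a)^4 + 16*c*b^2/a^3 - 64*d*b/a^2 + 256*e/a)) := by
  field_simp
  ring

theorem general_quartic_root_plus (a b c d e : ℂ) (ha : a ≠ 0) (P Q R : ℂ)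
    (hP : P = -6*(b/a)^2 + 16*c/a)
    (hQ : Q = 8*(b/a)^3 - 32*c*b/a^2 + 64*d/a)
    (hR : R = -3*(b/a)^4 + 16*c*b^2/a^3 - 64*d*b/a^2 + 256*e/a)
    (y₀ y₁ y₂ s₀ s₁ s₂ : ℂ)
    (he1 : y₀ + y₁ + y₂ = -P/2)
    (he2 : y₀*y₁ + y₀*y₂ + y₁*y₂ = (P^2 - 4*R)/16)
    (hs0 : s₀^2 = y₀) (hs1 : s₁^2 = y₁) (hs2 : s₂^2 = y₂)
    (hprod : 8*s₀*s₁*s₂ = -Q) :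
    a*((-(b/a) + s₀ + s₁ + s₂)/4)^4 + b*((-(b/a) + s₀ + s₁ + s₂)/4)^3
      + c*((-(b/a) + s₀ + s₁ + s₂)/4)^2 + d*((-(b/a) + s₀ + s₁ + s₂)/4) + e = 0 := by
  subst hs0 hs1 hs2
  have hu : -(b/a) + s₀ + s₁ + s₂ = -(b/a) + (s₀ + s₁ + s₂) := by ring
  have hroot := depressed_quartic_eval_sum_sqrt_eq_zero P Q R s₀ s₁ s₂ he1 he2 hprod
  rw [hu, quartic_eval_shift_eq_depressed ha, ← hP, ← hQ, ← hR, hroot, mul_zero]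
end

section
/- Let a, b, c, d, e ∈ ℂ with a ≠ 0. Define P = -6(b/a)² + 16c/a, Q = 8(b/a)³ - 32cb/a² + 64d/a, and R = -3(b/a)⁴ + 16cb²/a³ - 64db/a² + 256e/a. Let y₀, y₁, y₂, s₀, s₁, s₂ ∈ ℂ satisfy y₀ + y₁ + y₂ = -P/2, y₀y₁ + y₀y₂ + y₁y₂ = (P² - 4R)/16, s₀² = y₀, s₁² = y₁, s₂² = y₂, and 8·s₀·s₁·s₂ = Q. Then x = (-(b/a) - s₀ - s₁ - s₂)/4 satisfies a·x⁴ + b·x³ + c·x² + d·x + e = 0. -/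
/-!
The substitution `x = (-(b/a) - z)/4` turns `a x⁴ + b x³ + c x² + d x + e` into
`(a/256) (z⁴ + P z² - Q z + R)`. If `s₀, s₁, s₂` are square roots of the roots of the resolvent
cubic with `8 s₀ s₁ s₂ = Q`, then `z = s₀ + s₁ + s₂` is a root of `z⁴ + P z² - Q z + R`: in
`(z² - Σ sᵢ²)² = 4 (s₀s₁ + s₀s₂ + s₁s₂)² = 4 (Σ sᵢ² sⱼ² + 2 s₀s₁s₂ z)` the power sums are `e₁`, `e₂`
and the last term is `Q z`.
-/

theorem quartic_eval_neg_div_four_sub {K : Type*} [Field K] [CharZero K] {a b c d e P Q R : K}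
    (ha : a ≠ 0)
    (hP : P = -6*(b/a)^2 + 16*c/a)
    (hQ : Q = 8*(b/a)^3 - 32*c*b/a^2 + 64*d/a)
    (hR : R = -3*(b/a)^4 + 16*c*b^2/a^3 - 64*d*b/a^2 + 256*e/a) (z : K) :
    a*((-(b/a) - z)/4)^4 + b*((-(b/a) - z)/4)^3 + c*((-(b/a) - z)/4)^2 + d*((-(b/a) - z)/4) + e
      = a/256 * (z^4 + P*z^2 - Q*z + R) := by
  subst hP hQ hR
  field_simp
  ring

theorem sum_isRoot_of_sq_resolvent {K : Type*} [Field K] [CharZero K] {P Q R s₀ s₁ s₂ : K}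
    (he1 : s₀^2 + s₁^2 + s₂^2 = -P/2)
    (he2 : s₀^2*s₁^2 + s₀^2*s₂^2 + s₁^2*s₂^2 = (P^2 - 4*R)/16)
    (hprod : 8*s₀*s₁*s₂ = Q) :
    (s₀+s₁+s₂)^4 + P*(s₀+s₁+s₂)^2 - Q*(s₀+s₁+s₂) + R = 0 := by
  linear_combination (2*(s₀+s₁+s₂)^2 + P/2 - (s₀^2+s₁^2+s₂^2))*he1 + (s₀+s₁+s₂)*hprod + 4*he2

theorem general_quartic_root_minus (a b c d e : ℂ) (ha : a ≠ 0) (P Q R : ℂ)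
    (hP : P = -6*(b/a)^2 + 16*c/a)
    (hQ : Q = 8*(b/a)^3 - 32*c*b/a^2 + 64*d/a)
    (hR : R = -3*(b/a)^4 + 16*c*b^2/a^3 - 64*d*b/a^2 + 256*e/a)
    (y₀ y₁ y₂ s₀ s₁ s₂ : ℂ)
    (he1 : y₀ + y₁ + y₂ = -P/2)
    (he2 : y₀*y₁ + y₀*y₂ + y₁*y₂ = (P^2 - 4*R)/16)
    (hs0 : s₀^2 = y₀) (hs1 : s₁^2 = y₁) (hs2 : s₂^2 = y₂)
    (hprod : 8*s₀*s₁*s₂ = Q) :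
    a*((-(b/a) - s₀ - s₁ - s₂)/4)^4 + b*((-(b/a) - s₀ - s₁ - s₂)/4)^3
      + c*((-(b/a) - s₀ - s₁ - s₂)/4)^2 + d*((-(b/a) - s₀ - s₁ - s₂)/4) + e = 0 := by
  subst hs0 hs1 hs2
  have hroot := sum_isRoot_of_sq_resolvent he1 he2 hprod
  have heval := quartic_eval_neg_div_four_sub ha hP hQ hR (s₀ + s₁ + s₂)
  simp only [sub_add_eq_sub_sub] at heval
  rw [heval, hroot, mul_zero]
end

section
/- Let a, b, c, d, e ∈ ℂ with a ≠ 0. Define P = -6(b/a)² + 16c/a, Q = 8(b/a)³ - 32cb/a² + 64d/a, and R = -3(b/a)⁴ + 16cb²/a³ - 64db/a² + 256e/a. Let y₀, y₁, y₂, s₀, s₁, s₂ ∈ ℂ satisfy y₀ + y₁ + y₂ = -P/2, y₀y₁ + y₀y₂ + y₁y₂ = (P² - 4R)/16, s₀² = y₀, s₁² = y₁, s₂² = y₂, and 8·s₀·s₁·s₂ = -Q. Then for all x ∈ ℂ, a·x⁴ + b·x³ + c·x² + d·x + e = a·(x - X₁)·(x - X₂)·(x - X₃)·(x - X₄), where X₁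 = (-(b/a) + s₀ + s₁ + s₂)/4, X₂ = (-(b/a) - s₀ - s₁ + s₂)/4, X₃ = (-(b/a) - s₀ + s₁ - s₂)/4, and X₄ = (-(b/a) + s₀ - s₁ - s₂)/4. -/
/-!
Substituting `u = 4x + b/a` turns `a x⁴ + b x³ + c x² + d x + e` into `a/256 · (u⁴ + P u² + Q u + R)`.
Euler's identity expresses the product of the four `u - (±s₀ ± s₁ ± s₂)` (even number of minus
signs) through the elementary symmetric functions of the squares `sᵢ²` and the product `s₀ s₁ s₂`,
and the hypotheses on the `yᵢ = sᵢ²` say exactly that these match `P`, `Q` and `R`.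
-/

theorem quartic_eq_depressed {K : Type*} [Field K] [CharZero K] {a b c d e P Q R : K}
    (ha : a ≠ 0)
    (hP : P = -6*(b/a)^2 + 16*c/a)
    (hQ : Q = 8*(b/a)^3 - 32*c*b/a^2 + 64*d/a)
    (hR : R = -3*(b/a)^4 + 16*c*b^2/a^3 - 64*d*b/a^2 + 256*e/a) (x : K) :
    a*x^4 + b*x^3 + c*x^2 + d*x + e
      = a/256 * ((4*x + b/a)^4 + P*(4*x + b/a)^2 + Q*(4*x + b/a) + R) := by
  subst hP hQ hR
  field_simp
  ring

theorem depressed_quartic_eq_prod_even_signs {A : Type*} [CommRing A] {P Q R s₀ s₁ s₂ : A}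
    (hP : P = -2*(s₀^2 + s₁^2 + s₂^2))
    (hQ : Q = -8*s₀*s₁*s₂)
    (hR : R = (s₀^2 + s₁^2 + s₂^2)^2 - 4*(s₀^2*s₁^2 + s₀^2*s₂^2 + s₁^2*s₂^2)) (u : A) :
    u^4 + P*u^2 + Q*u + R
      = (u - (s₀ + s₁ + s₂))*(u - (-s₀ - s₁ + s₂))*(u - (-s₀ + s₁ - s₂))*(u - (s₀ - s₁ - s₂)) := by
  subst hP hQ hR
  ring

theorem general_quartic_factorization (a b c d e : ℂ) (ha : a ≠ 0) (P Q R : ℂ)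
    (hP : P = -6*(b/a)^2 + 16*c/a)
    (hQ : Q = 8*(b/a)^3 - 32*c*b/a^2 + 64*d/a)
    (hR : R = -3*(b/a)^4 + 16*c*b^2/a^3 - 64*d*b/a^2 + 256*e/a)
    (y₀ y₁ y₂ s₀ s₁ s₂ : ℂ)
    (he1 : y₀ + y₁ + y₂ = -P/2)
    (he2 : y₀*y₁ + y₀*y₂ + y₁*y₂ = (P^2 - 4*R)/16)
    (hs0 : s₀^2 = y₀) (hs1 : s₁^2 = y₁) (hs2 : s₂^2 = y₂)
    (hprod : 8*s₀*s₁*s₂ = -Q) :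
    ∀ x : ℂ,
      a*x^4 + b*x^3 + c*x^2 + d*x + e
        = a*(x - (-(b/a) + s₀ + s₁ + s₂)/4)*(x - (-(b/a) - s₀ - s₁ + s₂)/4)
            *(x - (-(b/a) - s₀ + s₁ - s₂)/4)*(x - (-(b/a) + s₀ - s₁ - s₂)/4) := by
  intro x
  subst hs0 hs1 hs2
  have hP' : P = -2*(s₀^2 + s₁^2 + s₂^2) := by linear_combination 2*he1
  have hQ' : Q = -8*s₀*s₁*s₂ := by linear_combination hprod
  have hR' : R = (s₀^2 + s₁^2 + s₂^2)^2 - 4*(s₀^2*s₁^2 + s₀^2*s₂^2 + s₁^2*s₂^2) := by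
    linear_combination (-(s₀^2 + s₁^2 + s₂^2) + P/2)*he1 + 4*he2
  rw [quartic_eq_depressed ha hP hQ hR, depressed_quartic_eq_prod_even_signs hP' hQ' hR']
  ring
end
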